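/- arXiv:1607.07080 — 2 statements merged into one kernel-verified Lean document; each statement's English description precedes it below -/
import Mathlib

section
/- Let M be a Metzler Hurwitz stable matrix and i ≠ j. Then e_jᵀM⁻¹e_i ≠ 0 if and only if there is a directed path from node i to node j in the graph G_M (vertices {1,…,d}, edge (m,n) iff m ≠ n and e_nᵀMe_m ≠ 0). Moreover in that case e_jᵀM⁻¹e_i < 0. -/
open Matrix

variable {d : ℕ}

/-- A real square matrix is Metzler if all its off-diagonal entries are nonnegative. -/
def Metzler (M : Matrix (Fin d) (Fin d) ℝ) : Prop :=
  ∀ i j, i ≠ j → 0 ≤ M i j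

/-- A real square matrix is Hurwitz stable if all its (complex) eigenvalues,
i.e. all roots of its characteristic polynomial, have strictly negative real part. -/
def IsHurwitz (M : Matrix (Fin d) (Fin d) ℝ) : Prop :=
  ∀ z : ℂ, (M.map (Complex.ofReal)).charpoly.IsRoot z → z.re < 0

/-- The directed graph associated with a matrix: edge from `m` to `n` iff `m ≠ n`
and the `(n, m)` entry of `M` is nonzero. -/
def edgeRel (M : Matrix (Fin d) (Fin d) ℝ) (m n : Fin d) : Prop :=
  m ≠ n ∧ M n m ≠ 0


open Filter
open scoped ENNReal

/-! For large `α > 0` the matrix `B = 1 + α⁻¹ • M` is entrywise nonnegative because `M` is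
Metzler, and its eigenvalues `1 + z / α` lie in the open unit disc because every eigenvalue `z` of
`M` has negative real part. By Gelfand's formula the Neumann series `∑ Bᵏ` then converges, and
`M⁻¹ = -α⁻¹ • ∑ Bᵏ`. The `(j, i)` entry of `Bᵏ` is a sum over walks of length `k` from `i` to `j`
of products of nonnegative weights, so it is positive for some `k` exactly when the graph of `B`,
which is the graph of `M`, has a path from `i` to `j`. -/

theorem spectrum.one_add_smul_eq_image {R A : Type*} [Field R] [Ring A] [Algebra R A]
    (a : A) {c : R} (hc : c ≠ 0) :
    spectrum R (1 + c • a) = (fun z => 1 + c * z) '' spectrum R a := by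
  have h := spectrum.singleton_add_eq ((Units.mk0 c hc) • a) (1 : R)
  rw [map_one, spectrum.unit_smul_eq_smul, Set.singleton_add, ← Set.image_smul,
    Set.image_image] at h
  exact h.symm

theorem Complex.eventually_norm_one_add_inv_mul_lt_one {z : ℂ} (hz : z.re < 0) :
    ∀ᶠ α : ℝ in atTop, ‖1 + (α : ℂ)⁻¹ * z‖ < 1 := by
  filter_upwards [eventually_gt_atTop 0, eventually_gt_atTop (‖z‖ ^ 2 / (-2 * z.re))]
    with α hα hαz
  rw [div_lt_iff₀ (by linarith)] at hαz
  -- `‖α + z‖² = α² + 2α re z + ‖z‖²`, and `‖z‖² < -2α re z` by the choice of `α`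
  have hsq : ‖(α : ℂ) + z‖ ^ 2 < α ^ 2 := by
    rw [Complex.sq_norm, Complex.normSq_apply] at hαz ⊢
    simp only [Complex.add_re, Complex.ofReal_re, Complex.add_im, Complex.ofReal_im]
    nlinarith
  have hscale : 1 + (α : ℂ)⁻¹ * z = ((α⁻¹ : ℝ) : ℂ) * (α + z) := by
    have : (α : ℂ) ≠ 0 := by exact_mod_cast hα.ne'
    push_cast
    field_simp
  rw [hscale, norm_mul, Complex.norm_real, Real.norm_of_nonneg (by positivity),
    inv_mul_lt_one₀ hα]
  exact lt_of_pow_lt_pow_left₀ 2 hα.le hsq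

theorem summable_norm_pow_of_spectralRadius_lt_one {A : Type*} [NormedRing A]
    [NormedAlgebra ℂ A] [CompleteSpace A] {a : A} (h : spectralRadius ℂ a < 1) :
    Summable fun n => ‖a ^ n‖ := by
  obtain ⟨r, hρr, hr1⟩ := ENNReal.lt_iff_exists_nnreal_btwn.mp h
  have hroot : ∀ᶠ n : ℕ in atTop, (‖a ^ n‖₊ : ℝ≥0∞) ^ (1 / n : ℝ) < r :=
    (spectrum.pow_nnnorm_pow_one_div_tendsto_nhds_spectralRadius a).eventually_lt_const hρr
  refine .of_norm_bounded_eventually_nat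
    (summable_geometric_of_lt_one r.2 (by exact_mod_cast hr1)) ?_
  filter_upwards [hroot, eventually_gt_atTop 0] with n hn hn0
  rw [one_div, ← ENNReal.coe_rpow_of_nonneg _ (by positivity), ENNReal.coe_lt_coe,
    NNReal.rpow_inv_lt_iff (by positivity), NNReal.rpow_natCast] at hn
  rw [norm_norm]
  exact_mod_cast hn.le

section LinftyOp

attribute [local instance] Matrix.linftyOpSeminormedAddCommGroup Matrix.linftyOpNormedRing
  Matrix.linftyOpNormedAlgebra

theorem Matrix.nnnorm_entry_le_linfty_opNNNorm {m n α : Type*} [Fintype m] [Fintype n]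
    [SeminormedAddCommGroup α] (A : Matrix m n α) (a : m) (b : n) : ‖A a b‖₊ ≤ ‖A‖₊ := by
  rw [linfty_opNNNorm_def]
  calc ‖A a b‖₊ ≤ ∑ c, ‖A a c‖₊ :=
        Finset.single_le_sum (f := fun c => ‖A a c‖₊) (fun _ _ => zero_le) (Finset.mem_univ b)
    _ ≤ _ := Finset.le_sup (f := fun a => ∑ c, ‖A a c‖₊) (Finset.mem_univ a)

theorem Matrix.summable_pow_apply_of_spectralRadius_lt_one {n : Type*} [Fintype n]
    [DecidableEq n] {B : Matrix n n ℝ} (h : spectralRadius ℂ (B.map Complex.ofReal) < 1)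
    (a b : n) : Summable fun k => (B ^ k) a b := by
  refine .of_norm_bounded (summable_norm_pow_of_spectralRadius_lt_one h) fun k => ?_
  have hpow : (B.map Complex.ofReal) ^ k = (B ^ k).map Complex.ofReal :=
    (map_pow Complex.ofRealHom.mapMatrix B k).symm
  calc ‖(B ^ k) a b‖ = ‖((B.map Complex.ofReal) ^ k) a b‖ := by
        rw [hpow, map_apply, Complex.norm_real]
    _ ≤ ‖(B.map Complex.ofReal) ^ k‖ := by
        exact_mod_cast nnnorm_entry_le_linfty_opNNNorm _ a b

theorem IsHurwitz.eventually_spectralRadius_lt_one [Nonempty (Fin d)]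
    {M : Matrix (Fin d) (Fin d) ℝ} (hH : IsHurwitz M) :
    ∀ᶠ α : ℝ in atTop, spectralRadius ℂ ((1 + α⁻¹ • M).map Complex.ofReal) < 1 := by
  have hre : ∀ z ∈ spectrum ℂ (M.map Complex.ofReal), z.re < 0 := fun z hz =>
    hH z (Matrix.mem_spectrum_iff_isRoot_charpoly.mp hz)
  filter_upwards [eventually_gt_atTop 0, (Matrix.finite_spectrum _).eventually_all.mpr
    fun z hz => Complex.eventually_norm_one_add_inv_mul_lt_one (hre z hz)] with α hα hnorm
  have hmap : (1 + α⁻¹ • M).map Complex.ofReal = 1 + (α : ℂ)⁻¹ • M.map Complex.ofReal := by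
    ext a b
    by_cases hab : a = b <;> simp [one_apply, hab]
  rw [hmap]
  refine (spectrum.spectralRadius_lt_of_forall_lt _ (r := 1) ?_).trans_eq ENNReal.coe_one
  rw [spectrum.one_add_smul_eq_image _ (inv_ne_zero (Complex.ofReal_ne_zero.mpr hα.ne'))]
  rintro _ ⟨z, hz, rfl⟩
  exact_mod_cast hnorm z hz

end LinftyOp

theorem Metzler.eventually_nonneg_one_add_inv_smul {M : Matrix (Fin d) (Fin d) ℝ}
    (hM : Metzler M) : ∀ᶠ α : ℝ in atTop, ∀ a b, 0 ≤ (1 + α⁻¹ • M) a b := by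
  filter_upwards [eventually_gt_atTop 0, eventually_all.mpr fun k => eventually_ge_atTop (-M k k)]
    with α hα hdiag a b
  rcases eq_or_ne a b with rfl | hab
  · have : 1 + α⁻¹ * M a a = α⁻¹ * (α + M a a) := by field_simp
    simpa [this] using mul_nonneg (inv_nonneg.mpr hα.le) (by linarith [hdiag a])
  · simpa [one_apply_ne hab] using mul_nonneg (inv_nonneg.mpr hα.le) (hM a b hab)

theorem Matrix.tsum_apply {ι m n R : Type*} [AddCommMonoid R] [TopologicalSpace R] [T2Space R]
    {f : ι → Matrix m n R} (hf : Summable f) (a : m) (b : n) :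
    (∑' k, f k) a b = ∑' k, f k a b :=
  (congrFun (_root_.tsum_apply hf) b).trans (_root_.tsum_apply (Pi.summable.mp hf a))

theorem Matrix.inv_eq_neg_smul_tsum_pow {n R : Type*} [Fintype n] [DecidableEq n] [CommRing R]
    [TopologicalSpace R] [IsTopologicalRing R] [T2Space R] (M : Matrix n n R) {c : R}
    (h : Summable fun k => (1 + c • M) ^ k) : M⁻¹ = -c • ∑' k, (1 + c • M) ^ k := by
  refine inv_eq_right_inv ?_
  calc M * (-c • ∑' k, (1 + c • M) ^ k) = (1 - (1 + c • M)) * ∑' k, (1 + c • M) ^ k := by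
        rw [sub_add_cancel_left, neg_mul, smul_mul_assoc, mul_smul_comm, neg_smul]
    _ = 1 := h.one_sub_mul_tsum_pow

theorem edgeRel_one_add_smul (M : Matrix (Fin d) (Fin d) ℝ) {c : ℝ} (hc : c ≠ 0) :
    edgeRel (1 + c • M) = edgeRel M := by
  ext m n
  simp only [edgeRel]
  exact and_congr_right fun hmn => by simp [one_apply_ne hmn.symm, hc]

section Paths

variable {B : Matrix (Fin d) (Fin d) ℝ}

theorem transGen_edgeRel_of_pow_apply_ne_zero {k : ℕ} {i j : Fin d} (hij : i ≠ j)
    (h : (B ^ k) j i ≠ 0) : Relation.TransGen (edgeRel B) i j := by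
  induction k generalizing i with
  | zero => exact absurd (one_apply_ne hij.symm) h
  | succ k ih =>
    rw [pow_succ, mul_apply] at h
    obtain ⟨m, -, hm⟩ := Finset.exists_ne_zero_of_sum_ne_zero h
    obtain ⟨hpow, hedge⟩ := mul_ne_zero_iff.mp hm
    rcases eq_or_ne i m with rfl | him
    · exact ih hij hpow
    rcases eq_or_ne m j with rfl | hmj
    · exact .single ⟨him, hedge⟩
    · exact .head ⟨him, hedge⟩ (ih hmj hpow)

theorem exists_pow_apply_pos_of_transGen_edgeRel (hB : ∀ a b, 0 ≤ B a b) {i j : Fin d}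
    (h : Relation.TransGen (edgeRel B) i j) : ∃ k, 0 < (B ^ k) j i := by
  induction h with
  | single he => exact ⟨1, by simpa using lt_of_le_of_ne (hB _ _) he.2.symm⟩
  | @tail m n _ he ih =>
    obtain ⟨k, hk⟩ := ih
    refine ⟨k + 1, ?_⟩
    rw [pow_succ', mul_apply]
    exact (Finset.sum_pos_iff_of_nonneg fun l _ =>
      mul_nonneg (hB n l) (pow_apply_nonneg hB k l i)).mpr
      ⟨m, Finset.mem_univ m, mul_pos (lt_of_le_of_ne (hB n m) he.2.symm) hk⟩

theorem tsum_pow_apply_pos_iff_transGen_edgeRel (hB : ∀ a b, 0 ≤ B a b) {i j : Fin d}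
    (hij : i ≠ j) (hsum : Summable fun k => (B ^ k) j i) :
    0 < ∑' k, (B ^ k) j i ↔ Relation.TransGen (edgeRel B) i j := by
  refine ⟨fun hpos => ?_, fun h => ?_⟩
  · obtain ⟨k, hk⟩ : ∃ k, (B ^ k) j i ≠ 0 := by
      by_contra! h
      simp [h] at hpos
    exact transGen_edgeRel_of_pow_apply_ne_zero hij hk
  · obtain ⟨k, hk⟩ := exists_pow_apply_pos_of_transGen_edgeRel hB h
    exact hsum.tsum_pos (fun k => pow_apply_nonneg hB k j i) k hk

end Paths

theorem static_gain_iff_path (M : Matrix (Fin d) (Fin d) ℝ)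
    (hM : Metzler M) (hH : IsHurwitz M) (i j : Fin d) (hij : i ≠ j) :
    (M⁻¹ j i ≠ 0 ↔ Relation.TransGen (edgeRel M) i j) ∧
    (Relation.TransGen (edgeRel M) i j → M⁻¹ j i < 0) := by
  have : Nonempty (Fin d) := ⟨i⟩
  obtain ⟨α, hα, hB, hρ⟩ := ((eventually_gt_atTop 0).and
    (hM.eventually_nonneg_one_add_inv_smul.and hH.eventually_spectralRadius_lt_one)).exists
  set B := 1 + α⁻¹ • M
  have hsum := summable_pow_apply_of_spectralRadius_lt_one hρ
  have hsumB : Summable fun k => B ^ k := Pi.summable.mpr fun a => Pi.summable.mpr (hsum a)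
  have hinv : M⁻¹ j i = -α⁻¹ * ∑' k, (B ^ k) j i := by
    rw [inv_eq_neg_smul_tsum_pow M hsumB, Matrix.smul_apply, smul_eq_mul, Matrix.tsum_apply hsumB]
  have hpath : 0 < ∑' k, (B ^ k) j i ↔ Relation.TransGen (edgeRel M) i j := by
    rw [← edgeRel_one_add_smul M (inv_ne_zero hα.ne')]
    exact tsum_pow_apply_pos_iff_transGen_edgeRel hB hij (hsum j i)
  have hS : 0 ≤ ∑' k, (B ^ k) j i := tsum_nonneg fun k => pow_apply_nonneg hB k j i
  have hc : -α⁻¹ < 0 := neg_neg_of_pos (inv_pos.mpr hα)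
  rw [hinv, ← hpath]
  exact ⟨(mul_ne_zero_iff_left hc.ne).trans hS.lt_iff_ne'.symm, mul_neg_of_neg_of_pos hc⟩
end

section
/- Let S be a d×d Metzler matrix with entries in {−1, 0, 1}. There exist matrices in the qualitative class Q(S) that are not Hurwitz stable if and only if there is no v ∈ ℝ^d_{>0} with vᵀS < 0, which by Farkas' lemma is equivalent to the existence of v₂, v₃ ∈ ℝ^d_{≥0} with ‖v₂ + v₃‖₁ = 1 and v₂ − S v₃ = 0. -/
open Matrix

variable {d : ℕ}

open Finset Relation Polynomial

/-!
A vector `v > 0` with `vᵀ S < 0` exists iff `S` has negative diagonal and its graph `edgeRel S` is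
acyclic: `v` strictly decreases along every edge, and conversely `v i = (d + 1) ^ (number of
descendants of i)` works. For acyclic graphs `det (z - M) = ∏ (z - M i i)`, since a permutation
other than the identity only contributes through a cycle of nonzero entries; so every `M ∈ Q(S)`
is Hurwitz in the acyclic case with negative diagonal, while `S` itself is not Hurwitz when a
diagonal entry is nonnegative. A cycle through `a` makes the descendants `T` of `a` a set closed
under edges in which every node has an in-edge, and rescaling the rows of `S` turns the indicator
of `T` into an eigenvector for the eigenvalue `2`. In both bad cases a vector `z ≥ 0`, `z ≠ 0`
with `S z ≥ 0` (a unit vector, or the indicator of `T`) normalises to the Farkas certificate.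
-/

theorem Real.sign_eq_self {x : ℝ} (h : x = -1 ∨ x = 0 ∨ x = 1) : Real.sign x = x := by
  rcases h with rfl | rfl | rfl
  · exact Real.sign_of_neg (by norm_num)
  · exact Real.sign_zero
  · exact Real.sign_one

theorem Real.sign_mul_of_pos {c : ℝ} (hc : 0 < c) (x : ℝ) :
    Real.sign (c * x) = Real.sign x := by
  rcases lt_trichotomy x 0 with hx | rfl | hx
  · rw [Real.sign_of_neg hx, Real.sign_of_neg (mul_neg_of_pos_of_neg hc hx)]
  · rw [mul_zero]
  · rw [Real.sign_of_pos hx, Real.sign_of_pos (mul_pos hc hx)]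

theorem Real.neg_of_sign_neg {x : ℝ} (h : Real.sign x < 0) : x < 0 := by
  rcases lt_trichotomy x 0 with hx | rfl | hx
  · exact hx
  · simp at h
  · rw [Real.sign_of_pos hx] at h
    norm_num at h

section Acyclic

variable {n R : Type*} [Fintype n] [DecidableEq n] [CommRing R]

theorem det_eq_prod_diag_of_acyclic {A : Matrix n n R} {r : n → n → Prop}
    (hr : ∀ i j, i ≠ j → A j i ≠ 0 → r i j) (hac : ∀ i, ¬ TransGen r i i) :
    A.det = ∏ i, A i i := by
  rw [det_apply, Finset.sum_eq_single 1 _ (by simp)]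
  · simp
  intro σ _ hσ
  obtain ⟨i, hi⟩ : ∃ i, σ i ≠ i := by
    by_contra! h
    exact hσ (Equiv.ext h)
  suffices ∃ j, A (σ j) j = 0 by
    obtain ⟨j, hj⟩ := this
    rw [Finset.prod_eq_zero (f := fun i => A (σ i) i) (Finset.mem_univ j) hj, smul_zero]
  by_contra! hA
  -- then `i → σ i → σ² i → ⋯` is a walk of `r` that returns to `i`
  have hstep : ∀ k : ℕ, r ((σ ^ k) i) ((σ ^ (k + 1)) i) := fun k => by
    have hne : (σ ^ (k + 1)) i ≠ (σ ^ k) i := by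
      rw [pow_succ, Equiv.Perm.mul_apply]
      exact (σ ^ k).injective.ne hi
    rw [pow_succ', Equiv.Perm.mul_apply] at hne ⊢
    exact hr _ _ hne.symm (hA _)
  have hchain : ∀ k : ℕ, TransGen r i ((σ ^ (k + 1)) i) := fun k => by
    induction k with
    | zero => simpa using TransGen.single (hstep 0)
    | succ k ih => exact ih.tail (hstep (k + 1))
  have hcycle := hchain (orderOf σ - 1)
  rw [Nat.sub_add_cancel (orderOf_pos σ), pow_orderOf_eq_one, Equiv.Perm.one_apply] at hcycle
  exact hac i hcycle

theorem charpoly_eq_prod_of_acyclic {M : Matrix n n R} {r : n → n → Prop}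
    (hr : ∀ i j, i ≠ j → M j i ≠ 0 → r i j) (hac : ∀ i, ¬ TransGen r i i) :
    M.charpoly = ∏ i, (X - C (M i i)) := by
  refine (det_eq_prod_diag_of_acyclic (r := r) (fun i j hij h => hr i j hij ?_) hac).trans ?_
  · rwa [charmatrix_apply_ne (h := hij.symm), neg_ne_zero, ne_eq, C_eq_zero] at h
  · simp only [charmatrix_apply_eq]

theorem mulVec_indicator_apply (A : Matrix n n R) (T : Finset n) (i : n) :
    (A *ᵥ fun k => if k ∈ T then 1 else 0) i = ∑ k ∈ T, A i k := by
  simp [mulVec, dotProduct, Finset.sum_ite_mem]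

end Acyclic

open scoped Classical in
theorem card_reflTransGen_lt_of_acyclic {α : Type*} [Fintype α] {r : α → α → Prop}
    (hac : ∀ a, ¬ TransGen r a a) {a b : α} (hab : r a b) :
    #{x | ReflTransGen r b x} < #{x | ReflTransGen r a x} := by
  refine Finset.card_lt_card ⟨fun x hx => ?_, fun hsub => ?_⟩
  · simp only [mem_filter, mem_univ, true_and] at hx ⊢
    exact ReflTransGen.head hab hx
  · have hba : ReflTransGen r b a := by simpa using hsub (by simp [ReflTransGen.refl] : a ∈ _)
    exact hac a (TransGen.head' hab hba)

theorem isHurwitz_iff_of_acyclic {M : Matrix (Fin d) (Fin d) ℝ}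
    (hac : ∀ i, ¬ TransGen (edgeRel M) i i) : IsHurwitz M ↔ ∀ i, M i i < 0 := by
  have hchar : (M.map Complex.ofReal).charpoly = ∏ i, (X - C (M i i : ℂ)) :=
    charpoly_eq_prod_of_acyclic (fun i j hij h => ⟨hij, by simpa using h⟩) hac
  simp [IsHurwitz, hchar, eval_prod, Finset.prod_eq_zero_iff, sub_eq_zero]

theorem not_isHurwitz_of_mulVec_eq_smul {M : Matrix (Fin d) (Fin d) ℝ} {z : Fin d → ℝ}
    {μ : ℝ} (hz : z ≠ 0) (hμ : 0 ≤ μ) (h : M *ᵥ z = μ • z) : ¬ IsHurwitz M := by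
  intro hM
  have hdet : (scalar (Fin d) μ - M).det = 0 :=
    exists_mulVec_eq_zero_iff.1 ⟨z, hz, by simp [sub_mulVec, h]⟩
  have hroot : M.charpoly.IsRoot μ := by rwa [IsRoot, eval_charpoly]
  have := hM μ (by
    rw [show M.map Complex.ofReal = M.map Complex.ofRealHom from rfl, charpoly_map]
    exact hroot.map)
  simp only [Complex.ofReal_re] at this
  linarith

theorem edgeRel_eq_of_sign_eq {M S : Matrix (Fin d) (Fin d) ℝ}
    (hM : ∀ i j, Real.sign (M i j) = S i j) : edgeRel M = edgeRel S := by
  ext m n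
  simp only [edgeRel, ← hM, ne_eq, Real.sign_eq_zero_iff]

theorem isHurwitz_of_sign_eq {M S : Matrix (Fin d) (Fin d) ℝ}
    (hM : ∀ i j, Real.sign (M i j) = S i j) (hdiag : ∀ i, S i i < 0)
    (hac : ∀ i, ¬ TransGen (edgeRel S) i i) : IsHurwitz M := by
  rw [← edgeRel_eq_of_sign_eq hM] at hac
  exact (isHurwitz_iff_of_acyclic hac).2 fun i =>
    Real.neg_of_sign_neg ((hM i i).trans_lt (hdiag i))

section SignMatrix

variable {S : Matrix (Fin d) (Fin d) ℝ}

theorem Metzler.sum_le_vecMul_apply (hMz : Metzler S) {v : Fin d → ℝ} (hv : ∀ i, 0 ≤ v i)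
    {s : Finset (Fin d)} {j : Fin d} (hj : j ∈ s) : ∑ i ∈ s, v i * S i j ≤ (v ᵥ* S) j :=
  Finset.sum_le_sum_of_subset_of_nonneg (subset_univ s) fun i _ hi =>
    mul_nonneg (hv i) (hMz i j (by rintro rfl; exact hi hj))

theorem offDiag_eq_zero_or_one (hsgn : ∀ i j, S i j = -1 ∨ S i j = 0 ∨ S i j = 1)
    (hMz : Metzler S) {i j : Fin d} (hij : i ≠ j) : S i j = 0 ∨ S i j = 1 := by
  rcases hsgn i j with h | h | h
  · linarith [hMz i j hij]
  · exact Or.inl h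
  · exact Or.inr h

theorem diag_neg_and_acyclic_of_lyapunov (hsgn : ∀ i j, S i j = -1 ∨ S i j = 0 ∨ S i j = 1)
    (hMz : Metzler S) {v : Fin d → ℝ} (hv : ∀ i, 0 < v i) (hvS : ∀ j, (v ᵥ* S) j < 0) :
    (∀ i, S i i < 0) ∧ ∀ i, ¬ TransGen (edgeRel S) i i := by
  have hv' : ∀ i, 0 ≤ v i := fun i => (hv i).le
  have hdiag : ∀ i, S i i < 0 := fun i => by
    have := (hMz.sum_le_vecMul_apply hv' (mem_singleton_self i)).trans_lt (hvS i)
    rw [sum_singleton] at this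
    exact neg_of_mul_neg_right this (hv' i)
  have hdec : ∀ i j, edgeRel S i j → v j < v i := by
    rintro i j ⟨hij, hji⟩
    have hsum := (hMz.sum_le_vecMul_apply hv' (mem_insert_self i {j})).trans_lt (hvS i)
    rw [sum_pair hij, (offDiag_eq_zero_or_one hsgn hMz hij.symm).resolve_left hji] at hsum
    rcases hsgn i i with h | h | h <;> rw [h] at hsum <;> linarith [hdiag i, hv i]
  refine ⟨hdiag, fun i hi => lt_irrefl (v i) ?_⟩
  have := TransGen.lift v (p := (· > ·)) hdec i i hi
  rwa [transGen_eq_self] at this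

open scoped Classical in
theorem lyapunov_of_diag_neg_of_acyclic (hsgn : ∀ i j, S i j = -1 ∨ S i j = 0 ∨ S i j = 1)
    (hMz : Metzler S) (hdiag : ∀ i, S i i < 0) (hac : ∀ i, ¬ TransGen (edgeRel S) i i) :
    ∃ v : Fin d → ℝ, (∀ i, 0 < v i) ∧ ∀ j, (v ᵥ* S) j < 0 := by
  set t : ℝ := d + 1
  set v : Fin d → ℝ := fun i => t ^ #{x | ReflTransGen (edgeRel S) i x}
  refine ⟨v, fun i => by positivity, fun j => ?_⟩
  have hterm : ∀ i ∈ univ.erase j, t * (v i * S i j) ≤ v j := by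
    intro i hi
    have hij := (mem_erase.1 hi).1
    rcases offDiag_eq_zero_or_one hsgn hMz hij with h | h
    · rw [h, mul_zero, mul_zero]
      positivity
    · rw [h, mul_one, ← pow_succ']
      exact pow_le_pow_right₀ (by simp [t])
        (card_reflTransGen_lt_of_acyclic hac ⟨hij.symm, by simp [h]⟩)
  have hsum : t * ∑ i ∈ univ.erase j, v i * S i j < t * v j :=
    calc t * ∑ i ∈ univ.erase j, v i * S i j
        ≤ #(univ.erase j) • v j := by rw [mul_sum]; exact sum_le_card_nsmul _ _ _ hterm
      _ ≤ d * v j := by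
          rw [nsmul_eq_mul]
          gcongr
          simp
      _ < t * v j := by gcongr; simp [t]
  have hdiag' : S j j = -1 := by rcases hsgn j j with h | h | h <;> linarith [hdiag j]
  have hcol : (v ᵥ* S) j = -v j + ∑ i ∈ univ.erase j, v i * S i j := by
    rw [show (v ᵥ* S) j = ∑ i, v i * S i j from rfl, ← add_sum_erase _ _ (mem_univ j), hdiag']
    ring
  rw [hcol]
  linarith [lt_of_mul_lt_mul_left hsum (by positivity : (0 : ℝ) ≤ t)]

open scoped Classical in
theorem exists_closed_finset_of_cycle {a : Fin d} (ha : TransGen (edgeRel S) a a) :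
    ∃ T : Finset (Fin d), T.Nonempty ∧ (∀ i ∉ T, ∀ k ∈ T, S i k = 0) ∧
      ∀ i ∈ T, ∃ k ∈ T, k ≠ i ∧ S i k ≠ 0 := by
  refine ⟨({x | ReflTransGen (edgeRel S) a x} : Finset _), ⟨a, by simp [ReflTransGen.refl]⟩,
    ?_, ?_⟩
  · intro i hi k hk
    by_contra hik
    simp only [mem_filter, mem_univ, true_and] at hi hk
    exact hi (hk.tail ⟨by rintro rfl; exact hi hk, hik⟩)
  · intro i hi
    simp only [mem_filter, mem_univ, true_and] at hi ⊢
    obtain ⟨k, hak, hki, hik⟩ := TransGen.tail'_iff.1 (ha.trans_left hi)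
    exact ⟨k, hak, hki, hik⟩

theorem exists_sign_eq_mulVec_indicator_eq_smul (hMz : Metzler S) {T : Finset (Fin d)}
    (hclosed : ∀ i ∉ T, ∀ k ∈ T, S i k = 0)
    (hpred : ∀ i ∈ T, ∃ k ∈ T, k ≠ i ∧ S i k ≠ 0) {μ : ℝ} (hμ : ∀ i ∈ T, S i i < μ) :
    ∃ M : Matrix (Fin d) (Fin d) ℝ, (∀ i j, Real.sign (M i j) = Real.sign (S i j)) ∧
      (M *ᵥ fun k => if k ∈ T then 1 else 0) = μ • fun k => if k ∈ T then 1 else 0 := by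
  have hoff : ∀ i ∈ T, 0 < ∑ k ∈ T.erase i, S i k := fun i hi => by
    obtain ⟨k, hk, hki, hik⟩ := hpred i hi
    exact sum_pos' (fun l hl => hMz i l (mem_erase.1 hl).1.symm)
      ⟨k, mem_erase.2 ⟨hki, hk⟩, (hMz i k hki.symm).lt_of_ne' hik⟩
  -- each row `i ∈ T` is rescaled off the diagonal so that its sum over `T` becomes `μ`
  set c : Fin d → ℝ := fun i => if i ∈ T then (μ - S i i) / ∑ k ∈ T.erase i, S i k else 1
  have hc : ∀ i, 0 < c i := fun i => by
    by_cases hi : i ∈ T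
    · simpa [c, hi] using div_pos (sub_pos.2 (hμ i hi)) (hoff i hi)
    · simp [c, hi]
  refine ⟨of fun i k => if i = k then S i i else c i * S i k, fun i k => ?_, funext fun i => ?_⟩
  · by_cases hik : i = k
    · simp [hik]
    · simp [hik, Real.sign_mul_of_pos (hc i)]
  simp only [mulVec_indicator_apply, of_apply]
  by_cases hi : i ∈ T
  · rw [← add_sum_erase _ _ hi, sum_congr rfl fun k hk => if_neg (mem_erase.1 hk).1.symm]
    simp only [← mul_sum, c, if_pos hi, Pi.smul_apply, smul_eq_mul, mul_one, if_true]
    rw [div_mul_cancel₀ _ (hoff i hi).ne', add_sub_cancel]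
  · rw [sum_eq_zero fun k hk => ?_]
    · simp [hi]
    · have hik : i ≠ k := by rintro rfl; exact hi hk
      simp [hik, hclosed i hi k hk]

theorem exists_sign_eq_not_isHurwitz_of_cycle
    (hsgn : ∀ i j, S i j = -1 ∨ S i j = 0 ∨ S i j = 1) (hMz : Metzler S) {a : Fin d}
    (ha : TransGen (edgeRel S) a a) :
    ∃ M : Matrix (Fin d) (Fin d) ℝ, (∀ i j, Real.sign (M i j) = S i j) ∧ ¬ IsHurwitz M := by
  obtain ⟨T, ⟨t, ht⟩, hclosed, hpred⟩ := exists_closed_finset_of_cycle ha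
  obtain ⟨M, hM, heig⟩ := exists_sign_eq_mulVec_indicator_eq_smul hMz hclosed hpred (μ := 2)
    fun i _ => by rcases hsgn i i with h | h | h <;> linarith
  refine ⟨M, fun i j => (hM i j).trans (Real.sign_eq_self (hsgn i j)), ?_⟩
  refine not_isHurwitz_of_mulVec_eq_smul (fun h => ?_) zero_le_two heig
  simpa [ht] using congrFun h t

theorem exists_nonneg_mulVec_nonneg_of_cycle
    (hsgn : ∀ i j, S i j = -1 ∨ S i j = 0 ∨ S i j = 1) (hMz : Metzler S) {a : Fin d}
    (ha : TransGen (edgeRel S) a a) :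
    ∃ z : Fin d → ℝ, (∀ i, 0 ≤ z i) ∧ z ≠ 0 ∧ ∀ i, 0 ≤ (S *ᵥ z) i := by
  obtain ⟨T, ⟨t, ht⟩, hclosed, hpred⟩ := exists_closed_finset_of_cycle ha
  refine ⟨fun k => if k ∈ T then 1 else 0, fun k => ite_nonneg zero_le_one le_rfl,
    fun h => by simpa [ht] using congrFun h t, fun i => ?_⟩
  rw [mulVec_indicator_apply]
  by_cases hi : i ∈ T
  · obtain ⟨k, hk, hki, hik⟩ := hpred i hi
    have hSik : S i k = 1 := (offDiag_eq_zero_or_one hsgn hMz hki.symm).resolve_left hik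
    have hrow : S i k ≤ ∑ l ∈ T.erase i, S i l :=
      single_le_sum (fun l hl => hMz i l (mem_erase.1 hl).1.symm) (mem_erase.2 ⟨hki, hk⟩)
    rw [← add_sum_erase _ _ hi]
    rcases hsgn i i with h | h | h <;> linarith
  · rw [sum_eq_zero (hclosed i hi)]

theorem exists_nonneg_mulVec_nonneg_of_diag_nonneg (hMz : Metzler S) {j : Fin d}
    (hj : 0 ≤ S j j) : ∃ z : Fin d → ℝ, (∀ i, 0 ≤ z i) ∧ z ≠ 0 ∧ ∀ i, 0 ≤ (S *ᵥ z) i := by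
  refine ⟨Pi.single j 1, fun i => ?_, by simp, fun i => ?_⟩
  · by_cases h : i = j <;> simp [h]
  · rw [mulVec_single_one, col_apply]
    by_cases h : i = j
    · rwa [h]
    · exact hMz i j h

theorem exists_sign_eq_not_isHurwitz (hsgn : ∀ i j, S i j = -1 ∨ S i j = 0 ∨ S i j = 1)
    (hMz : Metzler S) (h : ¬ ((∀ i, S i i < 0) ∧ ∀ i, ¬ TransGen (edgeRel S) i i)) :
    ∃ M : Matrix (Fin d) (Fin d) ℝ, (∀ i j, Real.sign (M i j) = S i j) ∧ ¬ IsHurwitz M := by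
  by_cases hac : ∀ i, ¬ TransGen (edgeRel S) i i
  · refine ⟨S, fun i j => Real.sign_eq_self (hsgn i j), ?_⟩
    rw [isHurwitz_iff_of_acyclic hac]
    exact fun hdiag => h ⟨hdiag, hac⟩
  · obtain ⟨a, ha⟩ := not_forall_not.1 hac
    exact exists_sign_eq_not_isHurwitz_of_cycle hsgn hMz ha

theorem exists_nonneg_mulVec_nonneg (hsgn : ∀ i j, S i j = -1 ∨ S i j = 0 ∨ S i j = 1)
    (hMz : Metzler S) (h : ¬ ((∀ i, S i i < 0) ∧ ∀ i, ¬ TransGen (edgeRel S) i i)) :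
    ∃ z : Fin d → ℝ, (∀ i, 0 ≤ z i) ∧ z ≠ 0 ∧ ∀ i, 0 ≤ (S *ᵥ z) i := by
  by_cases hdiag : ∀ i, S i i < 0
  · obtain ⟨a, ha⟩ : ∃ a, TransGen (edgeRel S) a a := by
      by_contra! hac
      exact h ⟨hdiag, hac⟩
    exact exists_nonneg_mulVec_nonneg_of_cycle hsgn hMz ha
  · obtain ⟨j, hj⟩ := not_forall.1 hdiag
    exact exists_nonneg_mulVec_nonneg_of_diag_nonneg hMz (not_lt.1 hj)

theorem farkas_of_nonneg_mulVec_nonneg {z : Fin d → ℝ} (hz : ∀ i, 0 ≤ z i) (hz0 : z ≠ 0)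
    (hSz : ∀ i, 0 ≤ (S *ᵥ z) i) :
    ∃ v2 v3 : Fin d → ℝ, (∀ i, 0 ≤ v2 i) ∧ (∀ i, 0 ≤ v3 i) ∧
      (∑ i, (v2 i + v3 i)) = 1 ∧ v2 - S *ᵥ v3 = 0 := by
  set c := ∑ i, ((S *ᵥ z) i + z i)
  have hc : 0 < c := by
    obtain ⟨i, hi⟩ := Function.ne_iff.1 hz0
    exact sum_pos' (fun i _ => add_nonneg (hSz i) (hz i))
      ⟨i, mem_univ i, add_pos_of_nonneg_of_pos (hSz i) ((hz i).lt_of_ne' hi)⟩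
  refine ⟨c⁻¹ • S *ᵥ z, c⁻¹ • z, fun i => ?_, fun i => ?_, ?_, ?_⟩
  · simpa using mul_nonneg (inv_nonneg.2 hc.le) (hSz i)
  · simpa using mul_nonneg (inv_nonneg.2 hc.le) (hz i)
  · simp only [Pi.smul_apply, smul_eq_mul, ← mul_add, ← mul_sum]
    exact inv_mul_cancel₀ hc.ne'
  · rw [mulVec_smul, sub_self]

theorem not_lyapunov_of_farkas
    (h : ∃ v2 v3 : Fin d → ℝ, (∀ i, 0 ≤ v2 i) ∧ (∀ i, 0 ≤ v3 i) ∧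
      (∑ i, (v2 i + v3 i)) = 1 ∧ v2 - S *ᵥ v3 = 0) :
    ¬ ∃ v : Fin d → ℝ, (∀ i, 0 < v i) ∧ ∀ j, (v ᵥ* S) j < 0 := by
  rintro ⟨v, hv, hvS⟩
  obtain ⟨v2, v3, h2, h3, hsum, heq⟩ := h
  obtain ⟨i, hi⟩ : ∃ i, 0 < v2 i + v3 i := by
    by_contra! hle
    linarith [sum_nonpos fun i (_ : i ∈ univ) => hle i]
  -- pairing `v2 = S v3` with `v` gives `v ⬝ v2 = (vᵀ S) ⬝ v3`, a sum of nonnegative terms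
  have hpair : ∑ i, (v i * v2 i - (v ᵥ* S) i * v3 i) = 0 := by
    rw [sum_sub_distrib, sub_eq_zero, sub_eq_zero.1 heq]
    exact dotProduct_mulVec v S v3
  have hterm : ∀ i, 0 ≤ v i * v2 i - (v ᵥ* S) i * v3 i := fun i => by
    nlinarith [mul_nonneg (hv i).le (h2 i), mul_nonneg (neg_nonneg.2 (hvS i).le) (h3 i)]
  have hpos : 0 < v i * v2 i - (v ᵥ* S) i * v3 i := by
    rcases (h2 i).eq_or_lt with h | h
    · rw [← h] at hi ⊢
      nlinarith [mul_pos (neg_pos.2 (hvS i)) (show 0 < v3 i by linarith)]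
    · nlinarith [mul_pos (hv i) h, mul_nonneg (neg_nonneg.2 (hvS i).le) (h3 i)]
  exact (sum_pos' (fun i _ => hterm i) ⟨i, mem_univ i, hpos⟩).ne' hpair

end SignMatrix

theorem sign_instability_farkas (S : Matrix (Fin d) (Fin d) ℝ)
    (hsgn : ∀ i j, S i j = -1 ∨ S i j = 0 ∨ S i j = 1)
    (hMz : ∀ i j, i ≠ j → 0 ≤ S i j) :
    ((∃ M : Matrix (Fin d) (Fin d) ℝ,
        (∀ i j, Real.sign (M i j) = S i j) ∧ ¬ IsHurwitz M)
      ↔ ¬ ∃ v : Fin d → ℝ, (∀ i, 0 < v i) ∧ ∀ j, (v ᵥ* S) j < 0)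
    ∧ ((¬ ∃ v : Fin d → ℝ, (∀ i, 0 < v i) ∧ ∀ j, (v ᵥ* S) j < 0)
      ↔ ∃ v2 v3 : Fin d → ℝ, (∀ i, 0 ≤ v2 i) ∧ (∀ i, 0 ≤ v3 i) ∧
          (∑ i, (v2 i + v3 i)) = 1 ∧ v2 - S *ᵥ v3 = 0) := by
  have hlyap : (∃ v : Fin d → ℝ, (∀ i, 0 < v i) ∧ ∀ j, (v ᵥ* S) j < 0) ↔
      (∀ i, S i i < 0) ∧ ∀ i, ¬ TransGen (edgeRel S) i i :=
    ⟨fun ⟨_, hv, hvS⟩ => diag_neg_and_acyclic_of_lyapunov hsgn hMz hv hvS,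
      fun ⟨hdiag, hac⟩ => lyapunov_of_diag_neg_of_acyclic hsgn hMz hdiag hac⟩
  refine ⟨⟨?_, fun h => exists_sign_eq_not_isHurwitz hsgn hMz (hlyap.not.1 h)⟩,
    fun h => ?_, not_lyapunov_of_farkas⟩
  · rintro ⟨M, hM, hunstable⟩ hv
    obtain ⟨hdiag, hac⟩ := hlyap.1 hv
    exact hunstable (isHurwitz_of_sign_eq hM hdiag hac)
  · obtain ⟨z, hz, hz0, hSz⟩ := exists_nonneg_mulVec_nonneg hsgn hMz (hlyap.not.1 h)
    exact farkas_of_nonneg_mulVec_nonneg hz hz0 hSz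
end
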